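/- arXiv:0910.0652 — 2 statements merged into one kernel-verified Lean document; each statement's English description precedes it below -/
import Mathlib

section
/- Let x0 ∈ [−√3/4, 0) and let h(x) = ((x − x0)^2 + (4/9) g(x)^4)^{1/2} with g(x) = (9x(2x0 − x)/4)^{1/3}, for x ∈ [2x0, 0]. Then h is a convex function on [2x0, 0] and satisfies 0 < ((3/2) x0^4)^{1/3} = h(x0) ≤ h(x) ≤ h(2x0) = h(0) = |x0| for every x ∈ [2x0, 0]. -/
/-!
Put `w = g x`. Then `h² = (x - x0)² + (4/9) w⁴`, and `x0² ≤ 3/16` forces `w ≤ 3/4` on the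
interval; with `(h²)' = 2 (x - x0) (1 - 4w/3)` the quantity `2 h² (h²)'' - ((h²)')²` becomes a sum
of nonnegative terms, which is exactly the convexity criterion for a square root. Since `h` is
invariant under the reflection `x ↦ 2 x0 - x`, convexity places its minimum at the midpoint `x0`
and its maximum at the endpoints, where `g` vanishes.
-/
open Set

theorem convexOn_sqrt_of_sq_deriv_le {D : Set ℝ} (hD : Convex ℝ D) {f f' f'' : ℝ → ℝ}
    (hf : ContinuousOn f D) (hf_pos : ∀ x ∈ interior D, 0 < f x)
    (hf' : ∀ x ∈ interior D, HasDerivAt f (f' x) x)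
    (hf'' : ∀ x ∈ interior D, HasDerivAt f' (f'' x) x)
    (hle : ∀ x ∈ interior D, f' x ^ 2 ≤ 2 * f x * f'' x) :
    ConvexOn ℝ D (fun x => √(f x)) := by
  refine convexOn_of_hasDerivWithinAt2_nonneg hD hf.sqrt
    (f' := fun x => f' x / (2 * √(f x)))
    (f'' := fun x => (2 * f x * f'' x - f' x ^ 2) / (4 * f x * √(f x)))
    (fun x hx => ((hf' x hx).sqrt (hf_pos x hx).ne').hasDerivWithinAt) (fun x hx => ?_)
    (fun x hx => div_nonneg (sub_nonneg.2 (hle x hx)) (by have := hf_pos x hx; positivity))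
  have hpos := hf_pos x hx
  have hderiv := (hf'' x hx).div (((hf' x hx).sqrt hpos.ne').const_mul 2) (by positivity)
  refine hderiv.hasDerivWithinAt.congr_deriv ?_
  have := Real.sq_sqrt hpos.le
  field_simp
  rw [this]
  ring

theorem ConvexOn.le_of_reflect {s : Set ℝ} {f : ℝ → ℝ} (hf : ConvexOn ℝ s f) {c x : ℝ}
    (hx : x ∈ s) (hx' : 2 * c - x ∈ s) (hsymm : f (2 * c - x) = f x) : f c ≤ f x := by
  have := hf.2 hx hx' (by norm_num : (0 : ℝ) ≤ 1 / 2) (by norm_num : (0 : ℝ) ≤ 1 / 2)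
    (by norm_num)
  simp only [smul_eq_mul, hsymm] at this
  calc f c = f (1 / 2 * x + 1 / 2 * (2 * c - x)) := by ring_nf
    _ ≤ f x := by linarith

noncomputable def tricomiCurve (x0 x : ℝ) : ℝ := (9 * x * (2 * x0 - x) / 4) ^ ((1 : ℝ) / 3)

noncomputable def tricomiHSq (x0 x : ℝ) : ℝ := (x - x0) ^ 2 + 4 / 9 * tricomiCurve x0 x ^ 4

theorem continuous_tricomiHSq (x0 : ℝ) : Continuous (tricomiHSq x0) := by
  unfold tricomiHSq tricomiCurve
  fun_prop (disch := norm_num)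

theorem tricomiCurve_reflect (x0 x : ℝ) : tricomiCurve x0 (2 * x0 - x) = tricomiCurve x0 x := by
  unfold tricomiCurve; ring_nf

theorem tricomiHSq_reflect (x0 x : ℝ) : tricomiHSq x0 (2 * x0 - x) = tricomiHSq x0 x := by
  unfold tricomiHSq; rw [tricomiCurve_reflect]; ring

theorem tricomiHSq_zero (x0 : ℝ) : tricomiHSq x0 0 = x0 ^ 2 := by
  simp [tricomiHSq, tricomiCurve]

section
variable {x0 x : ℝ}

theorem tricomiCurve_pow_three (h1 : 2 * x0 ≤ x) (h2 : x ≤ 0) :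
    tricomiCurve x0 x ^ 3 = 9 * x * (2 * x0 - x) / 4 := by
  rw [tricomiCurve, ← Real.rpow_natCast, ← Real.rpow_mul (by nlinarith)]
  norm_num

theorem tricomiCurve_pos (h1 : 2 * x0 < x) (h2 : x < 0) : 0 < tricomiCurve x0 x :=
  Real.rpow_pos_of_pos (by nlinarith) _

theorem tricomiCurve_le (hx0 : x0 ^ 2 ≤ 3 / 16) (h1 : 2 * x0 < x) (h2 : x < 0) :
    tricomiCurve x0 x ≤ 3 / 4 := by
  have hcube := tricomiCurve_pow_three h1.le h2.le
  refine (pow_le_pow_iff_left₀ (tricomiCurve_pos h1 h2).le (by norm_num) three_ne_zero).1 ?_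
  nlinarith [sq_nonneg (x - x0)]

theorem hasDerivAt_tricomiCurve (h1 : 2 * x0 < x) (h2 : x < 0) :
    HasDerivAt (tricomiCurve x0) (-(3 / 2) * (x - x0) / tricomiCurve x0 x ^ 2) x := by
  have hq : HasDerivAt (fun y => 9 * y * (2 * x0 - y) / 4) (-(9 / 2) * (x - x0)) x := by
    refine ((((hasDerivAt_id' x).const_mul 9).mul
      ((hasDerivAt_id' x).const_sub (2 * x0))).div_const 4).congr_deriv ?_
    ring
  have hq0 : 9 * x * (2 * x0 - x) / 4 ≠ 0 := by nlinarith
  have hcube := tricomiCurve_pow_three h1.le h2.le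
  have hg := (tricomiCurve_pos h1 h2).ne'
  refine (hq.rpow_const (p := 1 / 3) (Or.inl hq0)).congr_deriv ?_
  rw [Real.rpow_sub_one hq0, ← tricomiCurve, ← hcube]
  field_simp
  ring

theorem hasDerivAt_tricomiHSq (h1 : 2 * x0 < x) (h2 : x < 0) :
    HasDerivAt (tricomiHSq x0) (2 * (x - x0) * (1 - 4 / 3 * tricomiCurve x0 x)) x := by
  have hg := hasDerivAt_tricomiCurve h1 h2
  have hg0 := (tricomiCurve_pos h1 h2).ne'
  refine ((((hasDerivAt_id' x).sub_const x0).pow 2).add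
    ((hg.pow 4).const_mul (4 / 9))).congr_deriv ?_
  field_simp
  ring

theorem hasDerivAt_tricomiHSq_deriv (h1 : 2 * x0 < x) (h2 : x < 0) :
    HasDerivAt (fun y => 2 * (y - x0) * (1 - 4 / 3 * tricomiCurve x0 y))
      (2 * (1 - 4 / 3 * tricomiCurve x0 x) + 4 * (x - x0) ^ 2 / tricomiCurve x0 x ^ 2) x := by
  have hg := hasDerivAt_tricomiCurve h1 h2
  have hg0 := (tricomiCurve_pos h1 h2).ne'
  refine ((((hasDerivAt_id' x).sub_const x0).const_mul 2).mul
    ((hg.const_mul (4 / 3)).const_sub 1)).congr_deriv ?_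
  field_simp

theorem tricomiHSq_deriv_sq_le (hx0 : x0 ^ 2 ≤ 3 / 16) (h1 : 2 * x0 < x) (h2 : x < 0) :
    (2 * (x - x0) * (1 - 4 / 3 * tricomiCurve x0 x)) ^ 2 ≤
      2 * tricomiHSq x0 x *
        (2 * (1 - 4 / 3 * tricomiCurve x0 x) + 4 * (x - x0) ^ 2 / tricomiCurve x0 x ^ 2) := by
  have hw := tricomiCurve_pos h1 h2
  have hA : 0 ≤ 1 - 4 / 3 * tricomiCurve x0 x := by linarith [tricomiCurve_le hx0 h1 h2]
  rw [tricomiHSq]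
  set w := tricomiCurve x0 x
  set A := 1 - 4 / 3 * w
  have hgap : 2 * ((x - x0) ^ 2 + 4 / 9 * w ^ 4) * (2 * A + 4 * (x - x0) ^ 2 / w ^ 2) =
      (2 * (x - x0) * A) ^ 2 + 16 / 3 * (x - x0) ^ 2 * A * w + 8 * (x - x0) ^ 4 / w ^ 2 +
        16 / 9 * A * w ^ 4 + 32 / 9 * w ^ 2 * (x - x0) ^ 2 := by
    field_simp
    ring
  rw [hgap]
  have : 0 ≤ 16 / 3 * (x - x0) ^ 2 * A * w + 8 * (x - x0) ^ 4 / w ^ 2 +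
      16 / 9 * A * w ^ 4 + 32 / 9 * w ^ 2 * (x - x0) ^ 2 := by positivity
  linarith

theorem convexOn_sqrt_tricomiHSq (hx0 : x0 ^ 2 ≤ 3 / 16) :
    ConvexOn ℝ (Icc (2 * x0) 0) (fun x => √(tricomiHSq x0 x)) := by
  refine convexOn_sqrt_of_sq_deriv_le (convex_Icc _ _) (continuous_tricomiHSq x0).continuousOn
    (f' := fun y => 2 * (y - x0) * (1 - 4 / 3 * tricomiCurve x0 y))
    (f'' := fun y => 2 * (1 - 4 / 3 * tricomiCurve x0 y) + 4 * (y - x0) ^ 2 / tricomiCurve x0 y ^ 2)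
    ?_ ?_ ?_ ?_ <;> simp only [interior_Icc] <;> rintro x ⟨h1, h2⟩
  · have := tricomiCurve_pos h1 h2
    rw [tricomiHSq]
    positivity
  · exact hasDerivAt_tricomiHSq h1 h2
  · exact hasDerivAt_tricomiHSq_deriv h1 h2
  · exact tricomiHSq_deriv_sq_le hx0 h1 h2

theorem sqrt_tricomiHSq_self (hx0 : x0 < 0) :
    √(tricomiHSq x0 x0) = ((3 / 2) * x0 ^ 4) ^ ((1 : ℝ) / 3) := by
  have hw := tricomiCurve_pos (x0 := x0) (x := x0) (by linarith) hx0
  have hcube := tricomiCurve_pow_three (x0 := x0) (x := x0) (by linarith) hx0.le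
  have hsq : tricomiHSq x0 x0 = (2 / 3 * tricomiCurve x0 x0 ^ 2) ^ 2 := by
    rw [tricomiHSq]; ring
  rw [hsq, Real.sqrt_sq (by positivity)]
  refine (pow_left_inj₀ (by positivity) (by positivity) three_ne_zero).1 ?_
  rw [← Real.rpow_natCast (_ ^ _) 3, ← Real.rpow_mul (by positivity)]
  calc (2 / 3 * tricomiCurve x0 x0 ^ 2) ^ 3 = 8 / 27 * (tricomiCurve x0 x0 ^ 3) ^ 2 := by ring
    _ = _ := by rw [hcube]; norm_num; ring

end

/-- Lemma 4.5 i: for `x0 ∈ [-√3/4, 0)` the function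
`h(x) = ((x-x0)^2 + (4/9) g(x)^4)^(1/2)` is convex on `[2x0, 0]` and
`0 < ((3/2)x0^4)^(1/3) = h(x0) ≤ h(x) ≤ h(2x0) = h(0) = |x0|`. -/
theorem h_convex_and_bounds_small_x0
    (x0 : ℝ) (hx0l : -Real.sqrt 3 / 4 ≤ x0) (hx0 : x0 < 0)
    (g h : ℝ → ℝ)
    (hg : ∀ x : ℝ, g x = (9 * x * (2 * x0 - x) / 4) ^ ((1 : ℝ) / 3))
    (hh : ∀ x : ℝ, h x = ((x - x0) ^ 2 + (4 / 9) * (g x) ^ 4) ^ ((1 : ℝ) / 2)) :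
    ConvexOn ℝ (Icc (2 * x0) 0) h ∧
    0 < ((3 / 2) * x0 ^ 4) ^ ((1 : ℝ) / 3) ∧
    h x0 = ((3 / 2) * x0 ^ 4) ^ ((1 : ℝ) / 3) ∧
    h (2 * x0) = |x0| ∧ h 0 = |x0| ∧
    ∀ x ∈ Icc (2 * x0) 0, h x0 ≤ h x ∧ h x ≤ |x0| := by
  have hx0sq : x0 ^ 2 ≤ 3 / 16 := by
    nlinarith [Real.sq_sqrt (show (0 : ℝ) ≤ 3 by norm_num), Real.sqrt_nonneg 3]
  obtain rfl : h = fun x => √(tricomiHSq x0 x) := funext fun x => by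
    rw [hh, hg, Real.sqrt_eq_rpow, tricomiHSq, tricomiCurve]
  have hconv := convexOn_sqrt_tricomiHSq hx0sq
  have := hx0.ne
  have hright : √(tricomiHSq x0 0) = |x0| := by rw [tricomiHSq_zero, Real.sqrt_sq_eq_abs]
  have hleft : √(tricomiHSq x0 (2 * x0)) = |x0| := by
    rw [← sub_zero (2 * x0), tricomiHSq_reflect, hright]
  have hleft_mem : 2 * x0 ∈ Icc (2 * x0) 0 := ⟨le_rfl, by linarith⟩
  have hright_mem : (0 : ℝ) ∈ Icc (2 * x0) 0 := ⟨by linarith, le_rfl⟩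
  refine ⟨hconv, by positivity, sqrt_tricomiHSq_self hx0, hleft, hright, fun x hx => ⟨?_, ?_⟩⟩
  · refine hconv.le_of_reflect hx ⟨by linarith [hx.2], by linarith [hx.1]⟩ ?_
    simp only [tricomiHSq_reflect]
  · have := hconv.le_on_segment hleft_mem hright_mem (by rwa [segment_eq_Icc (by linarith)])
    rwa [hleft, hright, max_self] at this
end

section
/- Let x0 < −√3/4 and let h(x) = ((x − x0)^2 + (4/9) g(x)^4)^{1/2} with g(x) = (9x(2x0 − x)/4)^{1/3}, for x ∈ [2x0, 0]. Set x_± = x0 ± (x0^2 − 3/16)^{1/2}. Then 0 < (x0^2 − 3/64)^{1/2} = h(x_+) = h(x_−) ≤ h(x) ≤ C₄(x0) for all x ∈ [2x0, 0], where C₄(x0) = max{h(2x0), h(x0), h(0)}; explicitly, C₄(x0) = |x0| if −2/3 ≤ x0 < −√3/4, while C₄(x0) = ((3/2) x0^4)^{1/3} if x0 < −2/3, and for x0 = −2/3 one has h(2x0) = h(x0) = h(0) = |x0|. -/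
/-!
Write `a = x (2 x0 - x)`, which ranges over `[0, x0^2]` on `[2 x0, 0]`, and `u = g x`, so that
`u^3 = 9a/4` and `(x - x0)^2 = x0^2 - a`. Then `h x ^ 2 = x0^2 + (4/9) (u^4 - u^3)`, and everything
reduces to the quartic `u^4 - u^3 = (u - 3/4)^2 (u^2 + u/2 + 3/16) - 27/256`: its minimum `-27/256` is
attained at `u = 3/4`, i.e. at `a = 3/16`, i.e. at `x = x_±`; on `[0, g x0]` it is bounded by its
value at one of the endpoints `u = 0` (`x = 2 x0, 0`) or `u = g x0` (`x = x0`).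
-/

open Set

lemma rpow_one_third_pow_three {a : ℝ} (ha : 0 ≤ a) : (a ^ ((1 : ℝ) / 3)) ^ 3 = a := by
  simpa using Real.rpow_inv_natCast_pow (n := 3) ha (by norm_num)

lemma pow_three_rpow_one_third {u : ℝ} (hu : 0 ≤ u) : (u ^ 3) ^ ((1 : ℝ) / 3) = u := by
  simpa using Real.pow_rpow_inv_natCast (n := 3) hu (by norm_num)

lemma neg_div_le_pow_four_sub_pow_three (u : ℝ) : -27 / 256 ≤ u ^ 4 - u ^ 3 := by
  nlinarith [mul_nonneg (sq_nonneg (u - 3 / 4)) (add_nonneg (sq_nonneg (u + 1 / 4)) (by norm_num :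
    (0 : ℝ) ≤ 1 / 8))]

lemma pow_four_sub_pow_three_le_max {u U : ℝ} (hu : 0 ≤ u) (huU : u ≤ U) :
    u ^ 4 - u ^ 3 ≤ max 0 (U ^ 4 - U ^ 3) := by
  rcases le_total u 1 with hu1 | hu1
  · exact le_max_of_le_left (by nlinarith [pow_nonneg hu 3])
  · refine le_max_of_le_right ?_
    have : u ^ 3 ≤ U ^ 3 := pow_le_pow_left₀ hu huU 3
    nlinarith [pow_nonneg hu 3]

lemma mul_two_mul_sub_mem_Icc {x0 x : ℝ} (hx : x ∈ Icc (2 * x0) 0) :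
    x * (2 * x0 - x) ∈ Icc 0 (x0 ^ 2) :=
  ⟨by nlinarith [hx.1, hx.2], by nlinarith [sq_nonneg (x - x0)]⟩

lemma self_mul_two_mul_sub_nonneg (x0 : ℝ) : 0 ≤ x0 * (2 * x0 - x0) := by
  rw [two_mul, add_sub_cancel_right]
  exact mul_self_nonneg x0

namespace Tricomi

noncomputable def g (x0 x : ℝ) : ℝ := (9 * x * (2 * x0 - x) / 4) ^ ((1 : ℝ) / 3)

noncomputable def h (x0 x : ℝ) : ℝ := ((x - x0) ^ 2 + (4 / 9) * (g x0 x) ^ 4) ^ ((1 : ℝ) / 2)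

variable {x0 x : ℝ}

lemma g_nonneg (hx : 0 ≤ x * (2 * x0 - x)) : 0 ≤ g x0 x :=
  Real.rpow_nonneg (by nlinarith) _

lemma g_pow_three (hx : 0 ≤ x * (2 * x0 - x)) : g x0 x ^ 3 = 9 * x * (2 * x0 - x) / 4 :=
  rpow_one_third_pow_three (by nlinarith)

lemma g_le_g_self (hx : x ∈ Icc (2 * x0) 0) : g x0 x ≤ g x0 x0 := by
  have hmem := mul_two_mul_sub_mem_Icc hx
  exact Real.rpow_le_rpow (by nlinarith [hmem.1]) (by nlinarith [hmem.2]) (by norm_num)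

lemma h_eq_sqrt (hx : 0 ≤ x * (2 * x0 - x)) :
    h x0 x = √(x0 ^ 2 + 4 / 9 * (g x0 x ^ 4 - g x0 x ^ 3)) := by
  rw [h, Real.sqrt_eq_rpow]
  congr 1
  linear_combination 4 / 9 * g_pow_three hx

lemma h_two_mul_self : h x0 (2 * x0) = |x0| := by
  rw [h_eq_sqrt (by simp), show g x0 (2 * x0) = 0 by simp [g]]
  simp [Real.sqrt_sq_eq_abs]

lemma h_zero : h x0 0 = |x0| := by
  rw [h_eq_sqrt (by simp), show g x0 0 = 0 by simp [g]]
  simp [Real.sqrt_sq_eq_abs]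

lemma h_self : h x0 x0 = (3 / 2 * x0 ^ 4) ^ ((1 : ℝ) / 3) := by
  have hU := g_pow_three (self_mul_two_mul_sub_nonneg x0)
  have hU0 := g_nonneg (self_mul_two_mul_sub_nonneg x0)
  rw [h_eq_sqrt (self_mul_two_mul_sub_nonneg x0),
    show x0 ^ 2 + 4 / 9 * (g x0 x0 ^ 4 - g x0 x0 ^ 3) = (2 / 3 * g x0 x0 ^ 2) ^ 2 by
      linear_combination (-4 / 9) * hU,
    Real.sqrt_sq (by positivity),
    show 3 / 2 * x0 ^ 4 = (2 / 3 * g x0 x0 ^ 2) ^ 3 by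
      linear_combination (-8 / 27) * (g x0 x0 ^ 3 + 9 * x0 * (2 * x0 - x0) / 4) * hU,
    pow_three_rpow_one_third (by positivity)]

lemma h_eq_sqrt_of_mul_two_mul_sub_eq (hx : x * (2 * x0 - x) = 3 / 16) :
    h x0 x = √(x0 ^ 2 - 3 / 64) := by
  have hg : g x0 x = 3 / 4 := by
    rw [g, show 9 * x * (2 * x0 - x) / 4 = (3 / 4) ^ 3 by linear_combination 9 / 4 * hx]
    exact pow_three_rpow_one_third (by norm_num)
  rw [h_eq_sqrt (by rw [hx]; norm_num), hg]
  ring_nf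

lemma sqrt_le_h (hx : x ∈ Icc (2 * x0) 0) : √(x0 ^ 2 - 3 / 64) ≤ h x0 x := by
  rw [h_eq_sqrt (mul_two_mul_sub_mem_Icc hx).1]
  exact Real.sqrt_le_sqrt (by linarith [neg_div_le_pow_four_sub_pow_three (g x0 x)])

lemma h_le_max (hx : x ∈ Icc (2 * x0) 0) : h x0 x ≤ max |x0| (h x0 x0) := by
  have hmem := (mul_two_mul_sub_mem_Icc hx).1
  rw [h_eq_sqrt hmem, h_eq_sqrt (self_mul_two_mul_sub_nonneg x0), ← Real.sqrt_sq_eq_abs]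
  rcases le_max_iff.1 (pow_four_sub_pow_three_le_max (g_nonneg hmem) (g_le_g_self hx))
    with hle | hle
  · exact le_max_of_le_left (Real.sqrt_le_sqrt (by linarith))
  · exact le_max_of_le_right (Real.sqrt_le_sqrt (by linarith))

lemma h_self_le_abs (hx0 : |x0| ≤ 2 / 3) : h x0 x0 ≤ |x0| := by
  have h4 : x0 ^ 4 = |x0| ^ 4 := (Even.pow_abs (by decide) x0).symm
  calc h x0 x0 ≤ (|x0| ^ 3) ^ ((1 : ℝ) / 3) := by
        rw [h_self]
        exact Real.rpow_le_rpow (by positivity) (by nlinarith [pow_nonneg (abs_nonneg x0) 3])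
          (by norm_num)
    _ = |x0| := pow_three_rpow_one_third (abs_nonneg x0)

lemma abs_le_h_self (hx0 : 2 / 3 ≤ |x0|) : |x0| ≤ h x0 x0 := by
  have h4 : x0 ^ 4 = |x0| ^ 4 := (Even.pow_abs (by decide) x0).symm
  calc |x0| = (|x0| ^ 3) ^ ((1 : ℝ) / 3) := (pow_three_rpow_one_third (abs_nonneg x0)).symm
    _ ≤ h x0 x0 := by
        rw [h_self]
        exact Real.rpow_le_rpow (by positivity) (by nlinarith [pow_nonneg (abs_nonneg x0) 3])
          (by norm_num)

end Tricomi

/-- Lemma 4.5 ii, bounds: for `x0 < -√3/4`, with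
`x_± = x0 ± (x0^2 - 3/16)^(1/2)`, the function `h` satisfies
`0 < (x0^2 - 3/64)^(1/2) = h(x_+) = h(x_-) ≤ h(x) ≤ C₄(x0)` on `[2x0, 0]`,
where `C₄(x0) = max{h(2x0), h(x0), h(0)}`, with the explicit values of `C₄`. -/
theorem h_bounds_large_x0
    (x0 : ℝ) (hx0 : x0 < -Real.sqrt 3 / 4)
    (g h : ℝ → ℝ)
    (hg : ∀ x : ℝ, g x = (9 * x * (2 * x0 - x) / 4) ^ ((1 : ℝ) / 3))
    (hh : ∀ x : ℝ, h x = ((x - x0) ^ 2 + (4 / 9) * (g x) ^ 4) ^ ((1 : ℝ) / 2))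
    (xp xm : ℝ)
    (hxp : xp = x0 + (x0 ^ 2 - 3 / 16) ^ ((1 : ℝ) / 2))
    (hxm : xm = x0 - (x0 ^ 2 - 3 / 16) ^ ((1 : ℝ) / 2))
    (C4 : ℝ) (hC4 : C4 = max (h (2 * x0)) (max (h x0) (h 0))) :
    0 < (x0 ^ 2 - 3 / 64) ^ ((1 : ℝ) / 2) ∧
    h xp = (x0 ^ 2 - 3 / 64) ^ ((1 : ℝ) / 2) ∧
    h xm = (x0 ^ 2 - 3 / 64) ^ ((1 : ℝ) / 2) ∧
    (∀ x ∈ Icc (2 * x0) 0, h xp ≤ h x ∧ h x ≤ C4) ∧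
    (-2 / 3 ≤ x0 → C4 = |x0|) ∧
    (x0 < -2 / 3 → C4 = ((3 / 2) * x0 ^ 4) ^ ((1 : ℝ) / 3)) ∧
    (x0 = -2 / 3 → h (2 * x0) = |x0| ∧ h x0 = |x0| ∧ h 0 = |x0|) := by
  obtain rfl : g = Tricomi.g x0 := funext hg
  obtain rfl : h = Tricomi.h x0 := funext hh
  have hneg : x0 < 0 := hx0.trans_le (by linarith [Real.sqrt_nonneg 3])
  have hsq : 3 / 16 < x0 ^ 2 := by
    nlinarith [Real.sq_sqrt (show (0 : ℝ) ≤ 3 by norm_num), Real.sqrt_nonneg 3]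
  have hroot : ((x0 ^ 2 - 3 / 16) ^ ((1 : ℝ) / 2)) ^ 2 = x0 ^ 2 - 3 / 16 := by
    rw [← Real.sqrt_eq_rpow, Real.sq_sqrt (by linarith)]
  have hmin_p : Tricomi.h x0 xp = (x0 ^ 2 - 3 / 64) ^ ((1 : ℝ) / 2) := by
    rw [Tricomi.h_eq_sqrt_of_mul_two_mul_sub_eq (by rw [hxp]; linear_combination -hroot),
      Real.sqrt_eq_rpow]
  have hmin_m : Tricomi.h x0 xm = (x0 ^ 2 - 3 / 64) ^ ((1 : ℝ) / 2) := by
    rw [Tricomi.h_eq_sqrt_of_mul_two_mul_sub_eq (by rw [hxm]; linear_combination -hroot),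
      Real.sqrt_eq_rpow]
  have hC4' : C4 = max |x0| (Tricomi.h x0 x0) := by
    rw [hC4, Tricomi.h_two_mul_self, Tricomi.h_zero, max_comm _ |x0|, ← max_assoc, max_self]
  refine ⟨Real.rpow_pos_of_pos (by linarith) _, hmin_p, hmin_m, fun x hx => ⟨?_, ?_⟩,
    fun hle => ?_, fun hlt => ?_, fun hx0eq => ?_⟩
  · rw [hmin_p, ← Real.sqrt_eq_rpow]
    exact Tricomi.sqrt_le_h hx
  · exact hC4' ▸ Tricomi.h_le_max hx
  · exact hC4' ▸ max_eq_left (Tricomi.h_self_le_abs (abs_le.2 ⟨by linarith, by linarith⟩))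
  · rw [hC4', max_eq_right (Tricomi.abs_le_h_self (le_abs.2 (Or.inr (by linarith)))),
      Tricomi.h_self]
  · subst hx0eq
    exact ⟨Tricomi.h_two_mul_self, le_antisymm (Tricomi.h_self_le_abs (by norm_num))
      (Tricomi.abs_le_h_self (by norm_num)), Tricomi.h_zero⟩
end
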